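/- arXiv:2009.04709 — 3 statements merged into one kernel-verified Lean document; each statement's English description precedes it below -/
import Mathlib

section
/- Let E be a real inner product space, w ∈ E with w ≠ 0, and b ∈ ℝ, defining a binary linear classifier that outputs the positive class at v when ⟪w, v⟫ + b > 0 and the negative class when ⟪w, v⟫ + b < 0. Let x_i, x_j ∈ E with x_i ≠ x_j, and suppose both are correctly classified: ⟪w, x_i⟫ + b < 0 (ground truth negative) and ⟪w, x_j⟫ + b > 0 (ground truth positive). Then the sum of their robustnesses, inf{‖δ‖ : ⟪w, x_i + δ⟫ + b ≥ 0} + inf{‖δ‖ : ⟪w, x_j + δ⟫ + b ≤ 0}, equals ‖x_j − x_i‖ · sim(x_j − x_i, w). (Theorem 1, case of two correctly classified inputs.) -/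
/-!
The robustness of a correctly classified point `x` is its distance `|⟪w, x⟫ + b| / ‖w‖` to the
hyperplane `⟪w, v⟫ + b = 0`. For points on opposite sides the two distances add up to
`⟪w, xj - xi⟫ / ‖w‖`, which is the right-hand side once the factor `‖xj - xi‖` cancels.
-/

open RealInnerProductSpace

section HalfSpace

variable {E : Type*} [NormedAddCommGroup E] [InnerProductSpace ℝ E] {w : E}

/-- The closest point of the half-space `{δ | c ≤ ⟪w, δ⟫}` to the origin is `(c / ‖w‖²) • w`. -/
theorem isLeast_norm_of_le_inner (hw : w ≠ 0) {c : ℝ} (hc : 0 ≤ c) :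
    IsLeast {r : ℝ | ∃ δ : E, c ≤ ⟪w, δ⟫ ∧ ‖δ‖ = r} (c / ‖w‖) := by
  have hw' : 0 < ‖w‖ := norm_pos_iff.mpr hw
  refine ⟨⟨(c / ‖w‖ ^ 2) • w, ?_, ?_⟩, ?_⟩
  · rw [real_inner_smul_right, real_inner_self_eq_norm_sq, div_mul_cancel₀ _ (by positivity)]
  · rw [norm_smul, Real.norm_of_nonneg (by positivity)]
    field_simp
  · rintro r ⟨δ, hδ, rfl⟩
    rw [div_le_iff₀ hw', mul_comm]
    exact hδ.trans (real_inner_le_norm w δ)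

variable (b : ℝ) {x : E}

theorem sInf_norm_inner_add_ge_zero (hw : w ≠ 0) (hx : ⟪w, x⟫ + b ≤ 0) :
    sInf {r : ℝ | ∃ δ : E, ⟪w, x + δ⟫ + b ≥ 0 ∧ ‖δ‖ = r} = -(⟪w, x⟫ + b) / ‖w‖ := by
  rw [← (isLeast_norm_of_le_inner hw (neg_nonneg.mpr hx)).csInf_eq]
  congr 1
  ext r
  refine exists_congr fun δ => and_congr_left' ?_
  rw [inner_add_right]
  constructor <;> intro h <;> linarith

theorem sInf_norm_inner_add_le_zero (hw : w ≠ 0) (hx : 0 ≤ ⟪w, x⟫ + b) :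
    sInf {r : ℝ | ∃ δ : E, ⟪w, x + δ⟫ + b ≤ 0 ∧ ‖δ‖ = r} = (⟪w, x⟫ + b) / ‖w‖ := by
  rw [← norm_neg w, ← (isLeast_norm_of_le_inner (neg_ne_zero.mpr hw) hx).csInf_eq]
  congr 1
  ext r
  refine exists_congr fun δ => and_congr_left' ?_
  rw [inner_add_right, inner_neg_left]
  constructor <;> intro h <;> linarith

end HalfSpace

/-- Theorem 1, case of two correctly classified inputs: for the binary linear classifier
`v ↦ ⟪w, v⟫ + b`, the sum of the robustnesses of a correctly classified negative point
`x_i` and a correctly classified positive point `x_j` equals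
`‖x_j − x_i‖ · sim(x_j − x_i, w)`, where `sim` is cosine similarity. -/
theorem theorem1_correct_pair {E : Type*} [NormedAddCommGroup E] [InnerProductSpace ℝ E]
    (w : E) (hw : w ≠ 0) (b : ℝ) (xi xj : E) (hne : xi ≠ xj)
    (hi : ⟪w, xi⟫ + b < 0) (hj : ⟪w, xj⟫ + b > 0) :
    sInf {r : ℝ | ∃ δ : E, ⟪w, xi + δ⟫ + b ≥ 0 ∧ ‖δ‖ = r}
      + sInf {r : ℝ | ∃ δ : E, ⟪w, xj + δ⟫ + b ≤ 0 ∧ ‖δ‖ = r}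
      = ‖xj - xi‖ * (⟪xj - xi, w⟫ / (‖xj - xi‖ * ‖w‖)) := by
  rw [sInf_norm_inner_add_ge_zero b hw hi.le, sInf_norm_inner_add_le_zero b hw hj.le,
    ← mul_div_assoc, mul_div_mul_left _ _ (norm_ne_zero_iff.mpr (sub_ne_zero.mpr hne.symm)),
    inner_sub_left, real_inner_comm xj w, real_inner_comm xi w]
  ring
end

section
/- Let E be a real inner product space, C a finite class set, and a linear multiclass classifier given by weights W : C → E and biases b : C → ℝ with logits logit_c(v) = ⟪W_c, v⟫ + b_c. Let i ≠ j be classes and x_i ≠ x_j points such that: (a) x_i is correctly classified as i, i.e. logit_i(x_i) > logit_c(x_i) for all c ≠ i, and x_j is correctly classified as j; (b) W_c ≠ W_i for all c ≠ i and W_c ≠ W_j for all c ≠ j; (c) the nearest decision boundary from x_i is the i–j boundary, i.e. for all c ≠ i, (logit_i(x_i) − logit_j(x_i))/‖W_i − W_j‖ ≤ (logit_i(x_i) − logit_c(x_i))/‖W_i − W_c‖, and symmetrically the nearest boundary from x_j is the j–i boundary. Then inf{‖δ‖ : ∃ c ≠ i, logit_c(x_i + δ) ≥ logit_i(x_i +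 δ)} + inf{‖δ‖ : ∃ c ≠ j, logit_c(x_j + δ) ≥ logit_j(x_j + δ)} = ‖x_j − x_i‖ · sim(x_j − x_i, W_j − W_i). (Theorem 1, multiclass form: combined robustness of a pair of inputs of adjacent classes is proportional to the alignment between the vector connecting them and the gradient difference W_j − W_i.) -/
/-!
For a linear classifier, the perturbations `δ` that make class `c` beat class `i` at `x` form
the half-space `margin ≤ ⟪W c - W i, δ⟫`, where `margin` is the logit gap at `x`. By
Cauchy–Schwarz its distance from the origin is `margin / ‖W c - W i‖`, attained along
`W c - W i`; so the nearest-boundary hypothesis makes `margin_ij / ‖W i - W j‖` the robustness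
of `x_i`, and symmetrically for `x_j`. The biases cancel when the two margins are added, leaving
`⟪x_j - x_i, W j - W i⟫ / ‖W j - W i‖`, which is the cosine form of the right-hand side.
-/

open RealInnerProductSpace

section

variable {E : Type*} [NormedAddCommGroup E] [InnerProductSpace ℝ E]

theorem div_norm_le_norm_of_le_inner {v δ : E} {a : ℝ} (h : a ≤ ⟪v, δ⟫) :
    a / ‖v‖ ≤ ‖δ‖ :=
  div_le_of_le_mul₀ (norm_nonneg v) (norm_nonneg δ)
    (by rw [mul_comm]; exact h.trans (real_inner_le_norm v δ))

theorem exists_inner_eq_and_norm_eq {v : E} (hv : v ≠ 0) {a : ℝ} (ha : 0 ≤ a) :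
    ∃ δ : E, ⟪v, δ⟫ = a ∧ ‖δ‖ = a / ‖v‖ := by
  have hv' : ‖v‖ ≠ 0 := norm_ne_zero_iff.mpr hv
  refine ⟨(a / ‖v‖ ^ 2) • v, ?_, ?_⟩
  · rw [real_inner_smul_right, real_inner_self_eq_norm_sq]
    field_simp
  · rw [norm_smul, Real.norm_of_nonneg (by positivity)]
    field_simp

theorem norm_mul_inner_div_norm_mul_norm (x w : E) :
    ‖x‖ * (⟪x, w⟫ / (‖x‖ * ‖w‖)) = ⟪x, w⟫ / ‖w‖ := by
  rcases eq_or_ne x 0 with rfl | hx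
  · simp
  · have hx' : ‖x‖ ≠ 0 := norm_ne_zero_iff.mpr hx
    field_simp

theorem affine_le_affine_add_iff (w w' x δ : E) (β β' : ℝ) :
    ⟪w, x + δ⟫ + β ≤ ⟪w', x + δ⟫ + β' ↔ (⟪w, x⟫ + β) - (⟪w', x⟫ + β') ≤ ⟪w' - w, δ⟫ := by
  rw [inner_add_right, inner_add_right, inner_sub_left]
  constructor <;> intro h <;> linarith

theorem sInf_norm_misclassifying_eq {C : Type*} (W : C → E) (b : C → ℝ) (i j : C) (hji : j ≠ i)
    (x : E) (hclass : ⟪W j, x⟫ + b j ≤ ⟪W i, x⟫ + b i) (hW : W j ≠ W i)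
    (hnearest : ∀ c : C, c ≠ i →
      ((⟪W i, x⟫ + b i) - (⟪W j, x⟫ + b j)) / ‖W i - W j‖
        ≤ ((⟪W i, x⟫ + b i) - (⟪W c, x⟫ + b c)) / ‖W i - W c‖) :
    sInf {r : ℝ | ∃ δ : E, (∃ c : C, c ≠ i ∧ ⟪W c, x + δ⟫ + b c ≥ ⟪W i, x + δ⟫ + b i)
        ∧ ‖δ‖ = r}
      = ((⟪W i, x⟫ + b i) - (⟪W j, x⟫ + b j)) / ‖W i - W j‖ := by
  refine IsLeast.csInf_eq ⟨?_, ?_⟩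
  · obtain ⟨δ, hδ, hnorm⟩ :=
      exists_inner_eq_and_norm_eq (sub_ne_zero.mpr hW) (sub_nonneg.mpr hclass)
    refine ⟨δ, ⟨j, hji, (affine_le_affine_add_iff _ _ _ _ _ _).mpr hδ.ge⟩, ?_⟩
    rw [hnorm, norm_sub_rev]
  · rintro r ⟨δ, ⟨c, hc, hcross⟩, rfl⟩
    refine (hnearest c hc).trans ?_
    rw [norm_sub_rev]
    exact div_norm_le_norm_of_le_inner ((affine_le_affine_add_iff _ _ _ _ _ _).mp hcross)

end

theorem theorem1_multiclass_general {E C : Type*} [NormedAddCommGroup E] [InnerProductSpace ℝ E]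
    (W : C → E) (b : C → ℝ) (i j : C) (hij : i ≠ j)
    (xi xj : E)
    (hclassi : ∀ c : C, c ≠ i → ⟪W i, xi⟫ + b i > ⟪W c, xi⟫ + b c)
    (hclassj : ∀ c : C, c ≠ j → ⟪W j, xj⟫ + b j > ⟪W c, xj⟫ + b c)
    (hWi : ∀ c : C, c ≠ i → W c ≠ W i)
    (hnearesti : ∀ c : C, c ≠ i →
      ((⟪W i, xi⟫ + b i) - (⟪W j, xi⟫ + b j)) / ‖W i - W j‖
        ≤ ((⟪W i, xi⟫ + b i) - (⟪W c, xi⟫ + b c)) / ‖W i - W c‖)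
    (hnearestj : ∀ c : C, c ≠ j →
      ((⟪W j, xj⟫ + b j) - (⟪W i, xj⟫ + b i)) / ‖W j - W i‖
        ≤ ((⟪W j, xj⟫ + b j) - (⟪W c, xj⟫ + b c)) / ‖W j - W c‖) :
    sInf {r : ℝ | ∃ δ : E, (∃ c : C, c ≠ i ∧ ⟪W c, xi + δ⟫ + b c ≥ ⟪W i, xi + δ⟫ + b i)
        ∧ ‖δ‖ = r}
      + sInf {r : ℝ | ∃ δ : E, (∃ c : C, c ≠ j ∧ ⟪W c, xj + δ⟫ + b c ≥ ⟪W j, xj + δ⟫ + b j)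
        ∧ ‖δ‖ = r}
      = ‖xj - xi‖ * (⟪xj - xi, W j - W i⟫ / (‖xj - xi‖ * ‖W j - W i‖)) := by
  have hW : W j ≠ W i := hWi j hij.symm
  have margins_add : ⟪xj - xi, W j - W i⟫
      = ((⟪W i, xi⟫ + b i) - (⟪W j, xi⟫ + b j)) + ((⟪W j, xj⟫ + b j) - (⟪W i, xj⟫ + b i)) := by
    simp only [inner_sub_left, inner_sub_right, real_inner_comm]
    ring
  rw [sInf_norm_misclassifying_eq W b i j hij.symm xi (hclassi j hij.symm).le hW hnearesti,
    sInf_norm_misclassifying_eq W b j i hij xj (hclassj i hij).le hW.symm hnearestj,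
    norm_sub_rev (W i), ← add_div, norm_mul_inner_div_norm_mul_norm, margins_add]

/-- Theorem 1, multiclass form: for a linear multiclass classifier with logits
`logit_c v = ⟪W c, v⟫ + b c`, if `x_i` is correctly classified as `i`, `x_j` as `j`,
the weight differences to all other classes are nonzero, and the nearest decision
boundary from `x_i` (resp. `x_j`) is the `i`–`j` boundary, then the combined robustness
of the pair equals `‖x_j − x_i‖ · sim(x_j − x_i, W j − W i)`. -/
theorem theorem1_multiclass {E C : Type*} [NormedAddCommGroup E] [InnerProductSpace ℝ E]
    [Fintype C] (W : C → E) (b : C → ℝ) (i j : C) (hij : i ≠ j)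
    (xi xj : E) (hxij : xi ≠ xj)
    (hclassi : ∀ c : C, c ≠ i → ⟪W i, xi⟫ + b i > ⟪W c, xi⟫ + b c)
    (hclassj : ∀ c : C, c ≠ j → ⟪W j, xj⟫ + b j > ⟪W c, xj⟫ + b c)
    (hWi : ∀ c : C, c ≠ i → W c ≠ W i)
    (hWj : ∀ c : C, c ≠ j → W c ≠ W j)
    (hnearesti : ∀ c : C, c ≠ i →
      ((⟪W i, xi⟫ + b i) - (⟪W j, xi⟫ + b j)) / ‖W i - W j‖
        ≤ ((⟪W i, xi⟫ + b i) - (⟪W c, xi⟫ + b c)) / ‖W i - W c‖)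
    (hnearestj : ∀ c : C, c ≠ j →
      ((⟪W j, xj⟫ + b j) - (⟪W i, xj⟫ + b i)) / ‖W j - W i‖
        ≤ ((⟪W j, xj⟫ + b j) - (⟪W c, xj⟫ + b c)) / ‖W j - W c‖) :
    sInf {r : ℝ | ∃ δ : E, (∃ c : C, c ≠ i ∧ ⟪W c, xi + δ⟫ + b c ≥ ⟪W i, xi + δ⟫ + b i)
        ∧ ‖δ‖ = r}
      + sInf {r : ℝ | ∃ δ : E, (∃ c : C, c ≠ j ∧ ⟪W c, xj + δ⟫ + b c ≥ ⟪W j, xj + δ⟫ + b j)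
        ∧ ‖δ‖ = r}
      = ‖xj - xi‖ * (⟪xj - xi, W j - W i⟫ / (‖xj - xi‖ * ‖W j - W i‖)) :=
  theorem1_multiclass_general W b i j hij xi xj hclassi hclassj hWi hnearesti hnearestj
end

section
/- Let E be a real normed vector space with its Borel σ-algebra, μ a probability measure on E, and A, B disjoint measurable subsets with μ(A) + μ(B) = 1. Let T : E → E be measurable with (μ restricted to A) pushed forward by T equal to μ restricted to B. Let ρ, α : E → ℝ be μ-integrable, and let d₂ > 0. Assume for every x ∈ A: (i) ρ(x) + ρ(T x) = ‖T x − x‖ · α(x); (ii) α(T x) = α(x); (iii) α(x) ≥ 0; (iv) ‖T x − x‖ ≤ d₂. Then the expected alignment satisfies ∫ α dμ ≥ 2 · (∫ ρ dμ) / d₂. (Theorem 2, upper-bound direction: expected alignment is at least twice the expected robustness divided by sup(𝒟).) -/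
/-!
Pairing `A` with `B` through `T` turns every integral over the whole space into an integral
over `A` of `f x + f (T x)`. For `α` this is twice `∫ x in A, α x`, while for `ρ` it is
`∫ x in A, ‖T x - x‖ * α x ≤ d₂ * ∫ x in A, α x`.
-/

open MeasureTheory

section Pairing

variable {X : Type*} [MeasurableSpace X] {μ : Measure X} {A B : Set X}

theorem restrict_union_eq_self_of_measure_add_eq_one [IsProbabilityMeasure μ]
    (hA : MeasurableSet A) (hB : MeasurableSet B) (hdisj : Disjoint A B)
    (hAB : μ A + μ B = 1) : μ.restrict (A ∪ B) = μ :=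
  Measure.restrict_eq_self_of_ae_mem <| mem_ae_iff.2 <|
    (prob_compl_eq_zero_iff (hA.union hB)).2 (by rw [measure_union hdisj hB, hAB])

theorem integral_eq_setIntegral_add_comp {F : Type*} [NormedAddCommGroup F] [NormedSpace ℝ F]
    {T : X → X} {f : X → F} (hB : MeasurableSet B) (hdisj : Disjoint A B)
    (hcover : μ.restrict (A ∪ B) = μ)
    (hT : MeasurePreserving T (μ.restrict A) (μ.restrict B)) (hf : Integrable f μ) :
    ∫ x, f x ∂μ = ∫ x in A, (f x + f (T x)) ∂μ := by
  have hfB : Integrable f (μ.restrict B) := hf.integrableOn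
  have hfT : ∫ x in B, f x ∂μ = ∫ x in A, f (T x) ∂μ := by
    rw [← hT.map_eq, integral_map hT.measurable.aemeasurable (hT.map_eq ▸ hfB.1)]
  conv_lhs => rw [← hcover]
  rw [setIntegral_union hdisj hB hf.integrableOn hfB, hfT]
  exact (integral_add hf.integrableOn (hT.integrable_comp_of_integrable hfB)).symm

end Pairing

theorem theorem2_upper_bound_general {E : Type*} [NormedAddCommGroup E]
    [MeasurableSpace E]
    (μ : Measure E) [IsProbabilityMeasure μ]
    (A B : Set E) (hA : MeasurableSet A) (hB : MeasurableSet B)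
    (hdisj : Disjoint A B) (hAB : μ A + μ B = 1)
    (T : E → E) (hT : Measurable T)
    (hmap : Measure.map T (μ.restrict A) = μ.restrict B)
    (ρ α : E → ℝ) (hρ : Integrable ρ μ) (hα : Integrable α μ)
    (d₂ : ℝ) (hd₂ : 0 < d₂)
    (hpair : ∀ x ∈ A, ρ x + ρ (T x) = ‖T x - x‖ * α x)
    (hαT : ∀ x ∈ A, α (T x) = α x)
    (hαpos : ∀ x ∈ A, 0 ≤ α x)
    (hdist : ∀ x ∈ A, ‖T x - x‖ ≤ d₂) :
    ∫ x, α x ∂μ ≥ 2 * (∫ x, ρ x ∂μ) / d₂ := by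
  have hcover := restrict_union_eq_self_of_measure_add_eq_one hA hB hdisj hAB
  have hTA : MeasurePreserving T (μ.restrict A) (μ.restrict B) := ⟨hT, hmap⟩
  have hα_eq : ∫ x, α x ∂μ = 2 * ∫ x in A, α x ∂μ := by
    rw [integral_eq_setIntegral_add_comp hB hdisj hcover hTA hα, ← integral_const_mul]
    exact setIntegral_congr_fun hA fun x hx => by rw [hαT x hx]; ring
  have hρ_le : ∫ x, ρ x ∂μ ≤ d₂ * ∫ x in A, α x ∂μ := by
    rw [integral_eq_setIntegral_add_comp hB hdisj hcover hTA hρ, ← integral_const_mul]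
    refine integral_mono_of_nonneg ?_ (hα.integrableOn.const_mul d₂) ?_ <;>
      filter_upwards [ae_restrict_mem hA] with x hx <;> rw [hpair x hx]
    · exact mul_nonneg (norm_nonneg _) (hαpos x hx)
    · exact mul_le_mul_of_nonneg_right (hdist x hx) (hαpos x hx)
  rw [hα_eq, ge_iff_le, div_le_iff₀ hd₂]
  linarith

/-- Theorem 2, upper-bound direction: given a measure-preserving pairing `T` between the
supports `A` and `B` of the two classes, with pointwise robustness `ρ` and alignment `α`
satisfying `ρ x + ρ (T x) = ‖T x − x‖ · α x`, `α (T x) = α x`, `α x ≥ 0`, and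
`‖T x − x‖ ≤ d₂` on `A`, the expected alignment is at least `2 · (∫ ρ) / d₂`. -/
theorem theorem2_upper_bound {E : Type*} [NormedAddCommGroup E] [NormedSpace ℝ E]
    [MeasurableSpace E] [BorelSpace E]
    (μ : Measure E) [IsProbabilityMeasure μ]
    (A B : Set E) (hA : MeasurableSet A) (hB : MeasurableSet B)
    (hdisj : Disjoint A B) (hAB : μ A + μ B = 1)
    (T : E → E) (hT : Measurable T)
    (hmap : Measure.map T (μ.restrict A) = μ.restrict B)
    (ρ α : E → ℝ) (hρ : Integrable ρ μ) (hα : Integrable α μ)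
    (d₂ : ℝ) (hd₂ : 0 < d₂)
    (hpair : ∀ x ∈ A, ρ x + ρ (T x) = ‖T x - x‖ * α x)
    (hαT : ∀ x ∈ A, α (T x) = α x)
    (hαpos : ∀ x ∈ A, 0 ≤ α x)
    (hdist : ∀ x ∈ A, ‖T x - x‖ ≤ d₂) :
    ∫ x, α x ∂μ ≥ 2 * (∫ x, ρ x ∂μ) / d₂ :=
  theorem2_upper_bound_general μ A B hA hB hdisj hAB T hT hmap ρ α hρ hα d₂ hd₂ hpair hαT hαpos
    hdist
end
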